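/- arXiv:2505.03210 — 2 statements merged into one kernel-verified Lean document; each statement's English description precedes it below -/
import Mathlib

section
/- Let (B, ‖·‖_B) be a Banach space, let p, q > 0, and let a : [0, ∞) → B be locally Bochner integrable such that (1/T)·∫₀^T a(t) dt converges in norm to some L ∈ B as T → ∞. Then (1/T)·∫₀^T w_{p,q}(t/T)·a(t) dt also converges in norm to L as T → ∞. -/
/-!
Since `w = w_{p,q}` vanishes at `1` and `g = -w'` is integrable on `(0, 1)`, we have
`w s = ∫ u in s..1, g u`, and Fubini on the triangle `s ≤ u` turns the weighted average into
`∫ u in 0..1, g u • (T⁻¹ • ∫ t in 0..u * T, a t)`. The inner averages are bounded uniformly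
in `T ≥ 1` and `u ∈ (0, 1]` and tend to `u • L`, so dominated convergence gives the limit
`(∫ u in 0..1, g u * u) • L = (∫ s in 0..1, w s) • L = L`.
The integrability of `w'` comes from `y ^ 2 * exp (-y) ≤ 2` at `y = x ^ (-p) * (1 - x) ^ (-q)`.
-/

open MeasureTheory Filter

noncomputable def wpq (p q : ℝ) (x : ℝ) : ℝ :=
  if x ∈ Set.Ioo (0 : ℝ) 1 then
    (∫ s in (0:ℝ)..1, Real.exp (-(s ^ (-p) * (1 - s) ^ (-q))))⁻¹ *
      Real.exp (-(x ^ (-p) * (1 - x) ^ (-q)))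
  else 0

open Set Topology

section
variable {E : Type*} [NormedAddCommGroup E] [NormedSpace ℝ E]

theorem integral_smul_eq_integral_smul_primitive [CompleteSpace E] {a c : ℝ} (hac : a ≤ c)
    {w g : ℝ → ℝ} {b : ℝ → E} (hg : IntegrableOn g (Ioc a c)) (hb : IntegrableOn b (Ioc a c))
    (hw : ∀ s ∈ Ioc a c, w s = ∫ u in s..c, g u) :
    ∫ s in a..c, w s • b s = ∫ u in a..c, g u • ∫ s in a..u, b s := by
  set k : ℝ × ℝ → E := {z : ℝ × ℝ | z.1 ≤ z.2}.indicator fun z => g z.2 • b z.1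
  have hk : Integrable k ((volume.restrict (Ioc a c)).prod (volume.restrict (Ioc a c))) :=
    (hg.smul_prod hb).swap.indicator (measurableSet_le measurable_fst measurable_snd)
  have hk_fst : ∀ s, (fun u => k (s, u)) = (Ici s).indicator fun u => g u • b s := by
    intro s; ext u; simp [k, indicator_apply]
  have hk_snd : ∀ u, (fun s => k (s, u)) = (Iic u).indicator fun s => g u • b s := by
    intro u; ext s; simp [k, indicator_apply]
  rw [intervalIntegral.integral_of_le hac, intervalIntegral.integral_of_le hac]
  calc ∫ s in Ioc a c, w s • b s = ∫ s in Ioc a c, ∫ u in Ioc a c, k (s, u) := by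
        refine setIntegral_congr_fun measurableSet_Ioc fun s hs => ?_
        have hslice : Ioc a c ∩ Ici s = Icc s c := by
          ext u; simp only [mem_inter_iff, mem_Ioc, mem_Ici, mem_Icc]; grind [hs.1]
        rw [hk_fst, setIntegral_indicator measurableSet_Ici, hslice,
          integral_Icc_eq_integral_Ioc, integral_smul_const, hw s hs,
          intervalIntegral.integral_of_le hs.2]
    _ = ∫ u in Ioc a c, ∫ s in Ioc a c, k (s, u) := integral_integral_swap hk
    _ = ∫ u in Ioc a c, g u • ∫ s in a..u, b s := by
        refine setIntegral_congr_fun measurableSet_Ioc fun u hu => ?_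
        rw [hk_snd, setIntegral_indicator measurableSet_Iic, Ioc_inter_Iic, min_eq_right hu.2,
          integral_smul, intervalIntegral.integral_of_le hu.1.le]

theorem exists_norm_le_mul_of_tendsto_inv_smul {F : ℝ → E} {L : E} (hF : Continuous F)
    (h : Tendsto (fun T => T⁻¹ • F T) atTop (𝓝 L)) :
    ∃ C, ∀ T, 1 ≤ T → ∀ S ∈ Icc 0 T, ‖F S‖ ≤ C * T := by
  obtain ⟨S₁, hS₁⟩ : ∃ S₁, ∀ S ≥ S₁, ‖F S‖ ≤ (‖L‖ + 1) * S := by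
    obtain ⟨S₁, hS₁⟩ := eventually_atTop.1
      ((h.norm.eventually (gt_mem_nhds (lt_add_one ‖L‖))).and (eventually_gt_atTop 0))
    refine ⟨S₁, fun S hS => ?_⟩
    obtain ⟨hlt, hpos⟩ := hS₁ S hS
    rw [norm_smul, norm_inv, Real.norm_of_nonneg hpos.le, inv_mul_lt_iff₀ hpos] at hlt
    linarith
  obtain ⟨M, hM⟩ := (isCompact_Icc (a := 0) (b := S₁)).exists_bound_of_continuousOn
    hF.continuousOn
  refine ⟨max M 0 + (‖L‖ + 1), fun T hT S hS => ?_⟩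
  have hL : 0 ≤ ‖L‖ + 1 := by positivity
  rcases le_total S S₁ with hSS | hSS
  · calc ‖F S‖ ≤ max M 0 := (hM S ⟨hS.1, hSS⟩).trans (le_max_left _ _)
      _ ≤ max M 0 * T := le_mul_of_one_le_right (le_max_right _ _) hT
      _ ≤ _ := by nlinarith
  · calc ‖F S‖ ≤ (‖L‖ + 1) * S := hS₁ S hSS
      _ ≤ (‖L‖ + 1) * T := by gcongr; exact hS.2
      _ ≤ _ := by nlinarith [le_max_right M 0]

theorem tendsto_integral_smul_rescaled_average [CompleteSpace E] {g : ℝ → ℝ}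
    (hg : IntegrableOn g (Ioc 0 1)) {F : ℝ → E} {L : E} (hF : Continuous F)
    (h : Tendsto (fun T => T⁻¹ • F T) atTop (𝓝 L)) :
    Tendsto (fun T => ∫ u in (0:ℝ)..1, g u • T⁻¹ • F (u * T)) atTop
      (𝓝 ((∫ u in (0:ℝ)..1, g u * u) • L)) := by
  obtain ⟨C, hC⟩ := exists_norm_le_mul_of_tendsto_inv_smul hF h
  have hlim : (∫ u in (0:ℝ)..1, g u * u) • L = ∫ u in (0:ℝ)..1, g u • u • L := by
    simp only [smul_smul]
    exact (intervalIntegral.integral_smul_const _ _).symm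
  rw [hlim]
  refine intervalIntegral.tendsto_integral_filter_of_dominated_convergence (fun u => |g u| * C)
    (Eventually.of_forall fun T => ?_) ?_ ?_ (ae_of_all _ fun u hu => ?_)
  · rw [uIoc_of_le zero_le_one]
    exact hg.aestronglyMeasurable.smul
      ((hF.comp (continuous_mul_const T)).const_smul T⁻¹).aestronglyMeasurable
  · filter_upwards [eventually_ge_atTop 1] with T hT
    refine ae_of_all _ fun u hu => ?_
    rw [uIoc_of_le zero_le_one] at hu
    have hT0 : 0 < T := one_pos.trans_le hT
    have huT : u * T ∈ Icc 0 T :=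
      ⟨mul_nonneg hu.1.le hT0.le, mul_le_of_le_one_left hT0.le hu.2⟩
    rw [norm_smul, norm_smul, norm_inv, Real.norm_of_nonneg hT0.le, Real.norm_eq_abs]
    gcongr
    rw [inv_mul_le_iff₀ hT0]
    exact (hC T hT _ huT).trans_eq (mul_comm _ _)
  · exact (intervalIntegrable_iff_integrableOn_Ioc_of_le zero_le_one).2 (hg.norm.mul_const C)
  · rw [uIoc_of_le zero_le_one] at hu
    refine Tendsto.const_smul ?_ (g u)
    refine ((h.comp (tendsto_id.const_mul_atTop hu.1)).const_smul u).congr' ?_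
    filter_upwards [eventually_ne_atTop 0] with T hT
    simp only [Function.comp_apply, id, smul_smul, mul_inv, ← mul_assoc,
      mul_inv_cancel₀ hu.1.ne', one_mul]

theorem tendsto_weighted_average_of_tendsto_average [CompleteSpace E] {w g : ℝ → ℝ}
    (hg : IntegrableOn g (Ioc 0 1)) (hw : ∀ s ∈ Ioc (0:ℝ) 1, w s = ∫ u in s..1, g u)
    {a : ℝ → E} {L : E} (hloc : ∀ T, IntervalIntegrable a volume 0 T)
    (h : Tendsto (fun T => T⁻¹ • ∫ t in (0:ℝ)..T, a t) atTop (𝓝 L)) :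
    Tendsto (fun T => T⁻¹ • ∫ t in (0:ℝ)..T, w (t / T) • a t) atTop
      (𝓝 ((∫ s in (0:ℝ)..1, w s) • L)) := by
  have hmean : ∫ s in (0:ℝ)..1, w s = ∫ u in (0:ℝ)..1, g u * u := by
    simpa using integral_smul_eq_integral_smul_primitive zero_le_one hg
      (b := fun _ => (1:ℝ)) (integrableOn_const measure_Ioc_lt_top.ne) hw
  have hF : Continuous fun S => ∫ t in (0:ℝ)..S, a t :=
    intervalIntegral.continuous_primitive (fun c d => (hloc c).symm.trans (hloc d)) 0
  rw [hmean]
  refine (tendsto_integral_smul_rescaled_average hg hF h).congr' ?_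
  filter_upwards [eventually_gt_atTop 0] with T hT
  have hrescale : ∀ u, ∫ s in (0:ℝ)..u, a (T * s) = T⁻¹ • ∫ t in (0:ℝ)..u * T, a t := by
    intro u
    rw [intervalIntegral.integral_comp_mul_left a hT.ne', mul_zero, mul_comm]
  have hb : IntegrableOn (fun s => a (T * s)) (Ioc 0 1) := by
    have := (hloc T).comp_mul_left (c := T)
    rw [zero_div, div_self hT.ne'] at this
    exact this.1
  calc ∫ u in (0:ℝ)..1, g u • T⁻¹ • ∫ t in (0:ℝ)..u * T, a t
      = ∫ u in (0:ℝ)..1, g u • ∫ s in (0:ℝ)..u, a (T * s) := by simp only [hrescale]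
    _ = ∫ s in (0:ℝ)..1, w s • a (T * s) :=
        (integral_smul_eq_integral_smul_primitive zero_le_one hg hb hw).symm
    _ = T⁻¹ • ∫ t in (0:ℝ)..T, w (t / T) • a t := by
        have := intervalIntegral.integral_comp_mul_left (a := 0) (b := 1)
          (fun t => w (t / T) • a t) hT.ne'
        simpa only [mul_zero, mul_one, mul_div_cancel_left₀ _ hT.ne'] using this

end

theorem Real.exp_neg_le_inv {y : ℝ} (hy : 0 < y) : Real.exp (-y) ≤ y⁻¹ := by
  rw [Real.exp_neg]
  exact inv_anti₀ hy ((le_add_of_nonneg_right zero_le_one).trans (Real.add_one_le_exp y))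

theorem Real.exp_neg_mul_le_two_mul_inv {y : ℝ} (hy : 0 < y) :
    Real.exp (-y) * y ≤ 2 * y⁻¹ := by
  have := Real.quadratic_le_exp_of_nonneg hy.le
  rw [Real.exp_neg, inv_mul_le_iff₀ (Real.exp_pos y)]
  field_simp
  nlinarith

noncomputable def wpqExponent (p q x : ℝ) : ℝ := x ^ (-p) * (1 - x) ^ (-q)

noncomputable def wpqConst (p q : ℝ) : ℝ := ∫ s in (0:ℝ)..1, Real.exp (-wpqExponent p q s)

noncomputable def wpqDeriv (p q x : ℝ) : ℝ :=
  if x ∈ Ioo (0 : ℝ) 1 then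
    -((wpqConst p q)⁻¹ * Real.exp (-wpqExponent p q x) *
      (wpqExponent p q x * (q / (1 - x) - p / x)))
  else 0

section
variable {p q x : ℝ}

theorem wpq_of_mem (hx : x ∈ Ioo (0 : ℝ) 1) :
    wpq p q x = (wpqConst p q)⁻¹ * Real.exp (-wpqExponent p q x) := if_pos hx

theorem wpq_of_notMem (hx : x ∉ Ioo (0 : ℝ) 1) : wpq p q x = 0 := if_neg hx

theorem wpqExponent_nonneg (hx : x ∈ Icc (0 : ℝ) 1) : 0 ≤ wpqExponent p q x :=
  mul_nonneg (Real.rpow_nonneg hx.1 _) (Real.rpow_nonneg (sub_nonneg.2 hx.2) _)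

theorem wpqExponent_pos (hx : x ∈ Ioo (0 : ℝ) 1) : 0 < wpqExponent p q x :=
  mul_pos (Real.rpow_pos_of_pos hx.1 _) (Real.rpow_pos_of_pos (sub_pos.2 hx.2) _)

theorem inv_wpqExponent (hx : x ∈ Ioo (0 : ℝ) 1) :
    (wpqExponent p q x)⁻¹ = x ^ p * (1 - x) ^ q := by
  rw [wpqExponent, mul_inv, ← Real.rpow_neg hx.1.le, ← Real.rpow_neg (sub_pos.2 hx.2).le,
    neg_neg, neg_neg]

theorem hasDerivAt_wpqExponent (hx : x ∈ Ioo (0 : ℝ) 1) :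
    HasDerivAt (wpqExponent p q) (wpqExponent p q x * (q / (1 - x) - p / x)) x := by
  have hx0 : x ≠ 0 := hx.1.ne'
  have hx1 : 1 - x ≠ 0 := (sub_pos.2 hx.2).ne'
  have h := (Real.hasDerivAt_rpow_const (p := -p) (Or.inl hx0)).mul
    ((Real.hasDerivAt_rpow_const (p := -q) (Or.inl hx1)).comp x
      ((hasDerivAt_id x).const_sub 1))
  refine h.congr_deriv ?_
  simp only [Function.comp_apply, wpqExponent, Real.rpow_sub_one hx0, Real.rpow_sub_one hx1]
  ring

theorem wpqConst_pos (p q : ℝ) : 0 < wpqConst p q := by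
  have hint : IntervalIntegrable (fun s => Real.exp (-wpqExponent p q s)) volume 0 1 := by
    rw [intervalIntegrable_iff_integrableOn_Icc_of_le zero_le_one]
    refine Integrable.mono' (integrableOn_const measure_Icc_lt_top.ne (C := (1:ℝ)))
      (by unfold wpqExponent; fun_prop) ?_
    filter_upwards [ae_restrict_mem measurableSet_Icc] with s hs
    rw [Real.norm_of_nonneg (Real.exp_pos _).le, Real.exp_le_one_iff, neg_nonpos]
    exact wpqExponent_nonneg hs
  exact intervalIntegral.intervalIntegral_pos_of_pos_on hint (fun _ _ => Real.exp_pos _) one_pos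

theorem integral_wpq (p q : ℝ) : ∫ s in (0:ℝ)..1, wpq p q s = 1 := by
  rw [intervalIntegral.integral_of_le zero_le_one, integral_Ioc_eq_integral_Ioo,
    setIntegral_congr_fun measurableSet_Ioo fun s hs => wpq_of_mem hs, integral_const_mul,
    ← integral_Ioc_eq_integral_Ioo, ← intervalIntegral.integral_of_le zero_le_one]
  exact inv_mul_cancel₀ (wpqConst_pos p q).ne'

theorem hasDerivAt_wpq (hx : x ∈ Ioo (0 : ℝ) 1) : HasDerivAt (wpq p q) (wpqDeriv p q x) x := by
  have h := ((hasDerivAt_wpqExponent (p := p) (q := q) hx).neg.exp).const_mul (wpqConst p q)⁻¹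
  rw [wpqDeriv, if_pos hx]
  refine (h.congr_of_eventuallyEq ?_).congr_deriv ?_
  · filter_upwards [isOpen_Ioo.mem_nhds hx] with y hy using wpq_of_mem hy
  · simp only [Pi.neg_apply]
    ring

theorem tendsto_wpq_nhdsLT_one (hq : 0 < q) : Tendsto (wpq p q) (𝓝[<] 1) (𝓝 0) := by
  have hbound : ContinuousAt (fun x : ℝ => (wpqConst p q)⁻¹ * (x ^ p * (1 - x) ^ q)) 1 :=
    continuousAt_const.mul ((continuousAt_id.rpow_const (Or.inl one_ne_zero)).mul
      ((continuousAt_const.sub continuousAt_id).rpow_const (Or.inr hq.le)))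
  have h0 : (wpqConst p q)⁻¹ * ((1 : ℝ) ^ p * (1 - 1) ^ q) = 0 := by
    rw [sub_self, Real.zero_rpow hq.ne', mul_zero, mul_zero]
  refine squeeze_zero' (Eventually.of_forall fun x => ?_) ?_
    (h0 ▸ hbound.tendsto.mono_left nhdsWithin_le_nhds)
  · by_cases hx : x ∈ Ioo (0 : ℝ) 1
    · rw [wpq_of_mem hx]
      exact mul_nonneg (inv_nonneg.2 (wpqConst_pos p q).le) (Real.exp_pos _).le
    · rw [wpq_of_notMem hx]
  · filter_upwards [Ioo_mem_nhdsLT zero_lt_one] with x hx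
    rw [wpq_of_mem hx, ← inv_wpqExponent hx]
    gcongr
    · exact inv_nonneg.2 (wpqConst_pos p q).le
    · exact Real.exp_neg_le_inv (wpqExponent_pos hx)

theorem abs_wpqDeriv_le (hp : 0 ≤ p) (hq : 0 ≤ q) (hx : x ∈ Ioo (0 : ℝ) 1) :
    |wpqDeriv p q x| ≤ 2 * (wpqConst p q)⁻¹ * (p * x ^ (p - 1) + q * (1 - x) ^ (q - 1)) := by
  have hx1 : 0 < 1 - x := sub_pos.2 hx.2
  have hφ : 0 < wpqExponent p q x := wpqExponent_pos hx
  have hc : 0 < (wpqConst p q)⁻¹ := inv_pos.2 (wpqConst_pos p q)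
  calc |wpqDeriv p q x|
      = (wpqConst p q)⁻¹ * (Real.exp (-wpqExponent p q x) * wpqExponent p q x) *
          |q / (1 - x) - p / x| := by
        rw [wpqDeriv, if_pos hx, abs_neg, abs_mul, abs_mul, abs_mul, abs_of_pos hc,
          abs_of_pos (Real.exp_pos _), abs_of_pos hφ]
        ring
    _ ≤ (wpqConst p q)⁻¹ * (2 * (wpqExponent p q x)⁻¹) * (q / (1 - x) + p / x) := by
        gcongr (wpqConst p q)⁻¹ * ?_ * ?_
        · exact Real.exp_neg_mul_le_two_mul_inv hφ
        · refine (abs_sub _ _).trans_eq ?_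
          rw [abs_of_nonneg (div_nonneg hq hx1.le), abs_of_nonneg (div_nonneg hp hx.1.le)]
    _ = 2 * (wpqConst p q)⁻¹ *
          (p * x ^ (p - 1) * (1 - x) ^ q + q * (1 - x) ^ (q - 1) * x ^ p) := by
        rw [inv_wpqExponent hx, Real.rpow_sub_one hx.1.ne', Real.rpow_sub_one hx1.ne']
        ring
    _ ≤ 2 * (wpqConst p q)⁻¹ * (p * x ^ (p - 1) + q * (1 - x) ^ (q - 1)) := by
        gcongr 2 * (wpqConst p q)⁻¹ * (?_ + ?_)
        · exact mul_le_of_le_one_right (mul_nonneg hp (Real.rpow_nonneg hx.1.le _))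
            (Real.rpow_le_one hx1.le (sub_le_self _ hx.1.le) hq)
        · exact mul_le_of_le_one_right (mul_nonneg hq (Real.rpow_nonneg hx1.le _))
            (Real.rpow_le_one hx.1.le hx.2.le hp)

theorem integrableOn_wpqDeriv (hp : 0 < p) (hq : 0 < q) :
    IntegrableOn (wpqDeriv p q) (Ioc 0 1) := by
  have hbound : IntegrableOn
      (fun x => 2 * (wpqConst p q)⁻¹ * (p * x ^ (p - 1) + q * (1 - x) ^ (q - 1))) (Ioc 0 1) := by
    refine (intervalIntegrable_iff_integrableOn_Ioc_of_le zero_le_one).1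
      (.const_mul (.add ?_ ?_) _)
    · exact (intervalIntegral.intervalIntegrable_rpow' (by linarith)).const_mul _
    · simpa using ((intervalIntegral.intervalIntegrable_rpow' (a := 0) (b := 1) (r := q - 1)
        (by linarith)).comp_sub_left 1).symm.const_mul q
  have hmeas : Measurable (wpqDeriv p q) :=
    Measurable.ite measurableSet_Ioo (by unfold wpqExponent; fun_prop) measurable_const
  rw [integrableOn_Ioc_iff_integrableOn_Ioo]
  refine (hbound.mono_set Ioo_subset_Ioc_self).mono' hmeas.aestronglyMeasurable ?_
  filter_upwards [ae_restrict_mem measurableSet_Ioo] with x hx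
  exact abs_wpqDeriv_le hp.le hq.le hx

theorem wpq_eq_integral_neg_wpqDeriv (hp : 0 < p) (hq : 0 < q) {s : ℝ}
    (hs : s ∈ Ioc (0 : ℝ) 1) :
    wpq p q s = ∫ u in s..1, -wpqDeriv p q u := by
  have hcont : ContinuousOn (wpq p q) (Icc s 1) := by
    intro x hx
    rcases hx.2.lt_or_eq with hx1 | rfl
    · exact (hasDerivAt_wpq ⟨hs.1.trans_le hx.1, hx1⟩).continuousAt.continuousWithinAt
    · refine (continuousWithinAt_Iio_iff_Iic.1 ?_).mono fun y hy => hy.2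
      rw [ContinuousWithinAt, wpq_of_notMem (by simp)]
      exact tendsto_wpq_nhdsLT_one hq
  have hftc := intervalIntegral.integral_eq_sub_of_hasDerivAt_of_le hs.2 hcont
    (fun x hx => hasDerivAt_wpq ⟨hs.1.trans hx.1, hx.2⟩)
    ((intervalIntegrable_iff_integrableOn_Ioc_of_le hs.2).2
      ((integrableOn_wpqDeriv hp hq).mono_set (Ioc_subset_Ioc_left hs.1.le)))
  rw [intervalIntegral.integral_neg, hftc, wpq_of_notMem (x := 1) (by simp)]
  ring

end

/-- If `(1/T)∫₀ᵀ a` converges to `L` in a Banach space, then the `w_{p,q}`-weighted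
averages `(1/T)∫₀ᵀ w_{p,q}(t/T) a(t) dt` converge to `L` as well. -/
theorem weighted_integral_average_tendsto_of_average_tendsto
    {B : Type*} [NormedAddCommGroup B] [NormedSpace ℝ B] [CompleteSpace B]
    (p q : ℝ) (hp : 0 < p) (hq : 0 < q) (a : ℝ → B) (L : B)
    (hloc : ∀ T : ℝ, IntervalIntegrable a volume 0 T)
    (h : Tendsto (fun T : ℝ => T⁻¹ • ∫ t in (0:ℝ)..T, a t) atTop (nhds L)) :
    Tendsto (fun T : ℝ => T⁻¹ • ∫ t in (0:ℝ)..T, wpq p q (t / T) • a t)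
      atTop (nhds L) := by
  have h_weighted := tendsto_weighted_average_of_tendsto_average
    (integrableOn_wpqDeriv hp hq).neg (fun _ hs => wpq_eq_integral_neg_wpqDeriv hp hq hs) hloc h
  rwa [integral_wpq, one_smul] at h_weighted
end

section
/- Let d ≥ 1 be an integer, let p, q > 0, let E be a complex Banach space, and let K : ℝ^d → E be given by K(x) = ∑_{k∈ℤ^d} K̂(k)·exp(2πi⟨k,x⟩) with coefficients K̂(k) ∈ E satisfying ∑_{k∈ℤ^d} ‖K̂(k)‖·exp(2πσ‖k‖₁) < ∞ for some σ > 0. Assume ρ ∈ ℝ^d is nonresonant: for every nonzero k ∈ ℤ^d, ⟨k,ρ⟩ ∉ ℤ. Then for every fixed s ∈ ℤ^d, sup_{θ₀∈ℝ^d} ‖K̂(s) − exp(−2πi⟨s,θ₀⟩)·(A_N^{p,q})^{-1}·∑_{n=1}^{N−1} w_{p,q}(n/N)·K(θ₀ + nρ)·exp(−2πin⟨s,ρ⟩)‖ → 0 as N → ∞; i.e. the weighted average recovers each Fourier coefficient of K, uniformly in the initial angle θ₀. -/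
/-!
Expanding `K` in its Fourier series, the twisted average becomes
`∑ₖ e(⟨k - s, θ₀⟩) · S_N(e(⟨k - s, ρ⟩)) · K̂(k)` with `e(t) = exp(2πit)` and
`S_N(z) = A_N⁻¹ ∑ₙ w(n/N) zⁿ`. Here `S_N(1) = 1` and `|S_N| ≤ 1` on the unit circle. For `z ≠ 1`
(by nonresonance, every `k ≠ s`), Abel summation bounds `|∑ₙ w(n/N) zⁿ|` by
`(sup w + Var w) · 2 / |1 - z|` independently of `N`: `w = c⁻¹ exp(-exp(-φ))` with
`φ(x) = p log x + q log (1 - x)`, which increases up to `p / (p + q)` and decreases after, so `w`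
has variation at most `2 sup w`. As `A_N → ∞`, `S_N(z) → 0`, and dominated convergence against
`∑ ‖K̂(k)‖ < ∞` finishes; `θ₀` only enters through unimodular factors, whence uniformity.
-/

open MeasureTheory Filter

/-- The normalizer `A_N^{p,q} = ∑_{n=0}^{N-1} w_{p,q}(n/N)`. -/
noncomputable def Apq (p q : ℝ) (N : ℕ) : ℝ :=
  ∑ n ∈ Finset.range N, wpq p q ((n : ℝ) / N)

/-- `⟨k, x⟩ = ∑_j k_j x_j` for `k ∈ ℤ^d`, `x ∈ ℝ^d`. -/
def dotZ {d : ℕ} (k : Fin d → ℤ) (x : Fin d → ℝ) : ℝ :=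
  ∑ j, (k j : ℝ) * x j

open Real Set Topology

lemma eVariationOn_neg {f : ℝ → ℝ} {s : Set ℝ} :
    eVariationOn (fun x => -f x) s = eVariationOn f s := by
  simp [eVariationOn, edist_neg_neg]

lemma sum_Ico_one_eq_sum_range {M : Type*} [AddCommMonoid M] {f : ℕ → M} (hf : f 0 = 0)
    (N : ℕ) : ∑ n ∈ Finset.Ico 1 N, f n = ∑ n ∈ Finset.range N, f n := by
  rcases N.eq_zero_or_pos with rfl | hN
  · simp
  rw [Finset.sum_range_eq_add_Ico _ hN, hf, zero_add]

lemma tendsto_sum_range_div_atTop {f : ℝ → ℝ} {δ : ℝ} (hf : ∀ x, 0 ≤ f x) (hδ : 0 < δ)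
    (hfδ : ∀ x ∈ Icc (1 / 4 : ℝ) (1 / 2), δ ≤ f x) :
    Tendsto (fun N : ℕ => ∑ n ∈ Finset.range N, f (n / N)) atTop atTop := by
  have hmem (N : ℕ) : ∀ n ∈ Finset.Ioc (N / 4) (N / 2), (n / N : ℝ) ∈ Icc (1 / 4) (1 / 2) := by
    intro n hn
    rw [Finset.mem_Ioc] at hn
    have hN : (0 : ℝ) < N := by exact_mod_cast (by omega : 0 < N)
    have h4 : (N : ℝ) ≤ 4 * n := by exact_mod_cast (by omega : N ≤ 4 * n)
    have h2 : (2 * n : ℝ) ≤ N := by exact_mod_cast (by omega : 2 * n ≤ N)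
    constructor
    · rw [le_div_iff₀ hN]; linarith
    · rw [div_le_iff₀ hN]; linarith
  have hlow (N : ℕ) : ((N / 2 - N / 4 : ℕ) : ℝ) * δ ≤ ∑ n ∈ Finset.range N, f (n / N) :=
    calc ((N / 2 - N / 4 : ℕ) : ℝ) * δ = (Finset.Ioc (N / 4) (N / 2)).card • δ := by
          rw [Nat.card_Ioc, nsmul_eq_mul]
      _ ≤ ∑ n ∈ Finset.Ioc (N / 4) (N / 2), f (n / N) :=
          Finset.card_nsmul_le_sum _ _ _ fun n hn => hfδ _ (hmem N n hn)
      _ ≤ ∑ n ∈ Finset.range N, f (n / N) :=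
          Finset.sum_le_sum_of_subset_of_nonneg (fun n hn => by simp at hn ⊢; omega)
            fun _ _ _ => hf _
  refine tendsto_atTop_mono hlow (.atTop_mul_const hδ (tendsto_natCast_atTop_atTop.comp ?_))
  exact tendsto_atTop_atTop.2 fun b => ⟨4 * b + 4, fun N hN => by omega⟩

section Abel

variable {𝕜 : Type*} [NormedDivisionRing 𝕜] {z : 𝕜}

lemma norm_geom_sum_le (hz : ‖z‖ ≤ 1) (hz1 : z ≠ 1) (n : ℕ) :
    ‖∑ j ∈ Finset.range n, z ^ j‖ ≤ 2 / ‖1 - z‖ := by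
  have h1z : 0 < ‖1 - z‖ := norm_pos_iff.2 (sub_ne_zero.2 hz1.symm)
  rw [geom_sum_eq hz1, norm_div, norm_sub_rev z]
  gcongr
  calc ‖z ^ n - 1‖ ≤ ‖z‖ ^ n + ‖(1 : 𝕜)‖ := by grw [norm_sub_le, norm_pow]
    _ ≤ 2 := by rw [norm_one]; linarith [pow_le_one₀ (norm_nonneg z) hz (n := n)]

lemma norm_sum_mul_pow_le (hz : ‖z‖ ≤ 1) (hz1 : z ≠ 1) {a : ℕ → 𝕜} {M V : ℝ} {N : ℕ}
    (hM : ∀ n, ‖a n‖ ≤ M) (hV : ∑ n ∈ Finset.range N, ‖a (n + 1) - a n‖ ≤ V) :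
    ‖∑ n ∈ Finset.range N, a n * z ^ n‖ ≤ (M + V) * (2 / ‖1 - z‖) := by
  have hG := norm_geom_sum_le hz hz1
  have hV' : ∑ n ∈ Finset.range (N - 1), ‖a (n + 1) - a n‖ ≤ V :=
    (Finset.sum_le_sum_of_subset_of_nonneg (Finset.range_subset_range.2 (Nat.sub_le N 1))
      fun _ _ _ => norm_nonneg _).trans hV
  have hparts := Finset.sum_range_by_parts a (fun n => z ^ n) N
  simp only [smul_eq_mul] at hparts
  rw [hparts]
  calc _ ≤ ‖a (N - 1)‖ * ‖∑ j ∈ Finset.range N, z ^ j‖ + ∑ n ∈ Finset.range (N - 1),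
        ‖a (n + 1) - a n‖ * ‖∑ j ∈ Finset.range (n + 1), z ^ j‖ := by
        refine (norm_sub_le _ _).trans
          (add_le_add (norm_mul _ _).le ((norm_sum_le _ _).trans ?_))
        simp only [norm_mul, le_refl]
    _ ≤ M * (2 / ‖1 - z‖) + ∑ n ∈ Finset.range (N - 1), ‖a (n + 1) - a n‖ * (2 / ‖1 - z‖) := by
        have := (norm_nonneg _).trans (hM 0)
        gcongr
        exacts [hM _, hG _, hG _]
    _ ≤ (M + V) * (2 / ‖1 - z‖) := by
        rw [← Finset.sum_mul, add_mul]
        gcongr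

end Abel

lemma tendstoUniformly_of_hasSum_smul {ι α β 𝕜 E : Type*} [NormedField 𝕜]
    [NormedAddCommGroup E] [NormedSpace 𝕜 E] {l : Filter β} {v : ι → E}
    (hv : Summable fun k => ‖v k‖) {c : β → α → ι → 𝕜} {c' : ι → 𝕜} {F : β → α → E} {G : E}
    (hF : ∀ N x, HasSum (fun k => c N x k • v k) (F N x)) (hG : HasSum (fun k => c' k • v k) G)
    {b : β → ι → ℝ} {B : ℝ} (hcb : ∀ N x k, ‖c N x k - c' k‖ ≤ b N k)
    (hb0 : ∀ N k, 0 ≤ b N k) (hbB : ∀ N k, b N k ≤ B) (hb : ∀ k, Tendsto (b · k) l (𝓝 0)) :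
    TendstoUniformly F (fun _ => G) l := by
  have hbv (N : β) (k : ι) : b N k * ‖v k‖ ≤ B * ‖v k‖ :=
    mul_le_mul_of_nonneg_right (hbB N k) (norm_nonneg _)
  have hsum (N : β) : Summable fun k => b N k * ‖v k‖ :=
    (hv.mul_left B).of_nonneg_of_le (fun k => mul_nonneg (hb0 N k) (norm_nonneg _)) (hbv N)
  have hdist (N : β) (x : α) : dist G (F N x) ≤ ∑' k, b N k * ‖v k‖ := by
    rw [dist_comm, dist_eq_norm]
    refine ((hF N x).sub hG).norm_le_of_bounded (hsum N).hasSum fun k => ?_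
    rw [← sub_smul, norm_smul]
    exact mul_le_mul_of_nonneg_right (hcb N x k) (norm_nonneg _)
  have hlim : Tendsto (fun N => ∑' k, b N k * ‖v k‖) l (𝓝 0) := by
    simpa using tendsto_tsum_of_dominated_convergence (hv.mul_left B)
      (fun k => (hb k).mul_const ‖v k‖) (.of_forall fun N k => by
        rw [norm_of_nonneg (mul_nonneg (hb0 N k) (norm_nonneg _))]
        exact hbv N k)
  rw [Metric.tendstoUniformly_iff]
  intro ε hε
  filter_upwards [hlim.eventually (gt_mem_nhds hε)] with N hN x
  exact (hdist N x).trans_lt hN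

section LogProfile

variable {p q x : ℝ}

lemma hasDerivAt_mul_log_add_mul_log_one_sub (hx : x ∈ Ioo 0 1) :
    HasDerivAt (fun y => p * log y + q * log (1 - y)) (p / x - q / (1 - x)) x := by
  have h1 : HasDerivAt (fun y => 1 - y) (-1) x := by simpa using (hasDerivAt_id x).const_sub 1
  refine (((hasDerivAt_log hx.1.ne').const_mul p).add
    ((h1.log (sub_pos.2 hx.2).ne').const_mul q)).congr_deriv ?_
  ring

variable (hp : 0 < p) (hq : 0 < q)
include hp hq

lemma div_sub_div_one_sub_nonneg_iff (hx : x ∈ Ioo 0 1) :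
    0 ≤ p / x - q / (1 - x) ↔ x ≤ p / (p + q) := by
  rw [sub_nonneg, div_le_div_iff₀ (sub_pos.2 hx.2) hx.1, le_div_iff₀ (by positivity)]
  constructor <;> intro <;> linarith

lemma monotoneOn_mul_log_add_mul_log_one_sub :
    MonotoneOn (fun y => p * log y + q * log (1 - y)) (Ioc 0 (p / (p + q))) := by
  have hsub : Ioc 0 (p / (p + q)) ⊆ Ioo 0 1 := fun x hx =>
    ⟨hx.1, hx.2.trans_lt ((div_lt_one (by positivity)).2 (by linarith))⟩
  refine monotoneOn_of_hasDerivWithinAt_nonneg (f' := fun x => p / x - q / (1 - x))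
    (convex_Ioc _ _)
    (fun x hx => (hasDerivAt_mul_log_add_mul_log_one_sub (hsub hx)).continuousAt.continuousWithinAt)
    (fun x hx => ?_) (fun x hx => ?_) <;> rw [interior_Ioc] at hx
  · exact (hasDerivAt_mul_log_add_mul_log_one_sub (hsub (Ioo_subset_Ioc_self hx))).hasDerivWithinAt
  · exact (div_sub_div_one_sub_nonneg_iff hp hq (hsub (Ioo_subset_Ioc_self hx))).2 hx.2.le

lemma antitoneOn_mul_log_add_mul_log_one_sub :
    AntitoneOn (fun y => p * log y + q * log (1 - y)) (Ico (p / (p + q)) 1) := by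
  have hsub : Ico (p / (p + q)) 1 ⊆ Ioo 0 1 := fun x hx =>
    ⟨(by positivity : (0 : ℝ) < p / (p + q)).trans_le hx.1, hx.2⟩
  refine antitoneOn_of_hasDerivWithinAt_nonpos (f' := fun x => p / x - q / (1 - x))
    (convex_Ico _ _)
    (fun x hx => (hasDerivAt_mul_log_add_mul_log_one_sub (hsub hx)).continuousAt.continuousWithinAt)
    (fun x hx => ?_) (fun x hx => ?_) <;> rw [interior_Ico] at hx
  · exact (hasDerivAt_mul_log_add_mul_log_one_sub (hsub (Ioo_subset_Ico_self hx))).hasDerivWithinAt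
  · exact not_lt.1 fun h => hx.1.not_ge
      ((div_sub_div_one_sub_nonneg_iff hp hq (hsub (Ioo_subset_Ico_self hx))).1 h.le)

end LogProfile

/-- The constant `c_{p,q}`. -/
noncomputable def cpq (p q : ℝ) : ℝ := ∫ s in (0 : ℝ)..1, exp (-(s ^ (-p) * (1 - s) ^ (-q)))

lemma cpq_pos (p q : ℝ) : 0 < cpq p q := by
  refine intervalIntegral.intervalIntegral_pos_of_pos_on ?_ (fun x _ => exp_pos _) zero_lt_one
  rw [intervalIntegrable_iff_integrableOn_Ioc_of_le zero_le_one]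
  refine Integrable.mono' (integrable_const 1) (by fun_prop) ?_
  filter_upwards [ae_restrict_mem measurableSet_Ioc] with x hx
  rw [norm_of_nonneg (exp_pos _).le, exp_le_one_iff, neg_nonpos]
  exact mul_nonneg (rpow_nonneg hx.1.le _) (rpow_nonneg (by linarith [hx.2]) _)

section Weight

variable {p q a b x : ℝ}

lemma wpq_of_mem_Ioo (hx : x ∈ Ioo 0 1) :
    wpq p q x = (cpq p q)⁻¹ * exp (-(x ^ (-p) * (1 - x) ^ (-q))) :=
  if_pos hx

lemma wpq_of_notMem_Ioo (hx : x ∉ Ioo 0 1) : wpq p q x = 0 :=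
  if_neg hx

lemma wpq_nonneg (p q x : ℝ) : 0 ≤ wpq p q x := by
  unfold wpq
  split_ifs
  · exact mul_nonneg (inv_nonneg.2 (cpq_pos p q).le) (exp_pos _).le
  · rfl

lemma wpq_le (p q x : ℝ) : wpq p q x ≤ (cpq p q)⁻¹ := by
  by_cases hx : x ∈ Ioo 0 1
  · rw [wpq_of_mem_Ioo hx, exp_neg]
    refine mul_le_of_le_one_right (inv_nonneg.2 (cpq_pos p q).le) (inv_le_one_of_one_le₀ ?_)
    exact one_le_exp (mul_nonneg (rpow_nonneg hx.1.le _) (rpow_nonneg (by linarith [hx.2]) _))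
  · rw [wpq_of_notMem_Ioo hx]
    exact (inv_pos.2 (cpq_pos p q)).le

lemma wpq_eq_exp_neg_exp (hx : x ∈ Ioo 0 1) :
    wpq p q x = (cpq p q)⁻¹ * exp (-exp (-(p * log x + q * log (1 - x)))) := by
  rw [wpq_of_mem_Ioo hx, rpow_def_of_pos hx.1, rpow_def_of_pos (sub_pos.2 hx.2), ← exp_add]
  ring_nf

lemma wpq_le_wpq_of_mul_log_le (ha : a ∈ Ioo 0 1) (hb : b ∈ Ioo 0 1)
    (h : p * log a + q * log (1 - a) ≤ p * log b + q * log (1 - b)) :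
    wpq p q a ≤ wpq p q b := by
  rw [wpq_eq_exp_neg_exp ha, wpq_eq_exp_neg_exp hb]
  have := cpq_pos p q
  gcongr

lemma Apq_eq_sum_Ico (p q : ℝ) (N : ℕ) :
    Apq p q N = ∑ n ∈ Finset.Ico 1 N, wpq p q (n / N) :=
  (sum_Ico_one_eq_sum_range (by simp [wpq_of_notMem_Ioo]) N).symm

lemma Apq_nonneg (p q : ℝ) (N : ℕ) : 0 ≤ Apq p q N :=
  Finset.sum_nonneg fun _ _ => wpq_nonneg p q _

variable (hp : 0 < p) (hq : 0 < q)
include hp hq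

lemma wpq_monotoneOn : MonotoneOn (wpq p q) (Icc 0 (p / (p + q))) := by
  intro a ha b hb hab
  rcases ha.1.eq_or_lt with rfl | ha0
  · exact (wpq_of_notMem_Ioo (lt_irrefl 0 ·.1)).trans_le (wpq_nonneg p q b)
  have hm : p / (p + q) < 1 := (div_lt_one (by positivity)).2 (by linarith)
  exact wpq_le_wpq_of_mul_log_le ⟨ha0, ha.2.trans_lt hm⟩ ⟨ha0.trans_le hab, hb.2.trans_lt hm⟩
    (monotoneOn_mul_log_add_mul_log_one_sub hp hq ⟨ha0, ha.2⟩ ⟨ha0.trans_le hab, hb.2⟩ hab)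

lemma wpq_antitoneOn : AntitoneOn (wpq p q) (Icc (p / (p + q)) 1) := by
  intro a ha b hb hab
  rcases hb.2.eq_or_lt with rfl | hb1
  · exact (wpq_of_notMem_Ioo (lt_irrefl 1 ·.2)).trans_le (wpq_nonneg p q a)
  have hm : 0 < p / (p + q) := by positivity
  exact wpq_le_wpq_of_mul_log_le ⟨hm.trans_le hb.1, hb1⟩ ⟨hm.trans_le ha.1, hab.trans_lt hb1⟩
    (antitoneOn_mul_log_add_mul_log_one_sub hp hq ⟨ha.1, hab.trans_lt hb1⟩ ⟨hb.1, hb1⟩ hab)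

lemma eVariationOn_wpq_le :
    eVariationOn (wpq p q) (Icc 0 1) ≤ ENNReal.ofReal (2 * (cpq p q)⁻¹) := by
  set m := p / (p + q)
  have hm0 : 0 ≤ m := by positivity
  have hm1 : m ≤ 1 := (div_le_one (by positivity)).2 (by linarith)
  have hinc := (wpq_monotoneOn hp hq).eVariationOn_eq (left_mem_Icc.2 hm0) (right_mem_Icc.2 hm0)
  have hdec := (wpq_antitoneOn hp hq).neg.eVariationOn_eq (left_mem_Icc.2 hm1)
    (right_mem_Icc.2 hm1)
  rw [inter_self] at hinc hdec
  rw [eVariationOn_neg] at hdec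
  rw [← univ_inter (Icc 0 1), ← eVariationOn.Icc_add_Icc _ hm0 hm1 (mem_univ m), univ_inter,
    univ_inter, hinc, hdec, two_mul]
  refine (add_le_add (ENNReal.ofReal_le_ofReal ?_) (ENNReal.ofReal_le_ofReal ?_)).trans
    (ENNReal.ofReal_add (inv_nonneg.2 (cpq_pos p q).le) (inv_nonneg.2 (cpq_pos p q).le)).ge
  · linarith [wpq_le p q m, wpq_nonneg p q 0]
  · linarith [wpq_le p q m, wpq_nonneg p q 1]

lemma sum_abs_sub_wpq_le (N : ℕ) :
    ∑ n ∈ Finset.range N, |wpq p q ((n + 1 : ℕ) / N) - wpq p q (n / N)| ≤ 2 * (cpq p q)⁻¹ := by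
  have hu : MonotoneOn (fun n : ℕ => (n / N : ℝ)) (Icc 0 N) := fun a _ b _ hab => by
    dsimp only; gcongr
  have hmem : ∀ n ∈ Icc 0 N, (n / N : ℝ) ∈ Icc 0 1 := fun n hn =>
    ⟨by positivity, div_le_one_of_le₀ (by exact_mod_cast hn.2) (Nat.cast_nonneg N)⟩
  have := (eVariationOn.sum_le_of_monotoneOn_Icc (f := wpq p q) hu hmem).trans
    (eVariationOn_wpq_le hp hq)
  rw [← Finset.range_eq_Ico] at this
  simp_rw [edist_dist, Real.dist_eq] at this
  rwa [← ENNReal.ofReal_sum_of_nonneg (fun _ _ => abs_nonneg _),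
    ENNReal.ofReal_le_ofReal_iff (by have := cpq_pos p q; positivity)] at this

lemma le_wpq_of_mem_Icc (hx : x ∈ Icc (1 / 4 : ℝ) (1 / 2)) :
    (cpq p q)⁻¹ * exp (-((1 / 4 : ℝ) ^ (-p) * (1 / 2 : ℝ) ^ (-q))) ≤ wpq p q x := by
  rw [wpq_of_mem_Ioo ⟨by linarith [hx.1], by linarith [hx.2]⟩]
  have := cpq_pos p q
  have h1 : x ^ (-p) ≤ (1 / 4 : ℝ) ^ (-p) :=
    rpow_le_rpow_of_nonpos (by norm_num) hx.1 (by linarith)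
  have h2 : (1 - x) ^ (-q) ≤ (1 / 2 : ℝ) ^ (-q) :=
    rpow_le_rpow_of_nonpos (by norm_num) (by linarith [hx.2]) (by linarith)
  have h3 : 0 ≤ (1 - x) ^ (-q) := rpow_nonneg (by linarith [hx.2]) _
  gcongr

lemma tendsto_Apq_atTop : Tendsto (Apq p q) atTop atTop :=
  tendsto_sum_range_div_atTop (wpq_nonneg p q) (by have := cpq_pos p q; positivity)
    (fun _ => le_wpq_of_mem_Icc hp hq)

end Weight

noncomputable def weightedPowerAverage (p q : ℝ) (N : ℕ) (z : ℂ) : ℂ :=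
  (Apq p q N : ℂ)⁻¹ * ∑ n ∈ Finset.Ico 1 N, (wpq p q (n / N) : ℂ) * z ^ n

section WeightedPowerAverage

variable {p q : ℝ} {z : ℂ}

lemma norm_weightedPowerAverage_le_one (hz : ‖z‖ ≤ 1) (N : ℕ) :
    ‖weightedPowerAverage p q N z‖ ≤ 1 := by
  have hsum : ‖∑ n ∈ Finset.Ico 1 N, (wpq p q (n / N) : ℂ) * z ^ n‖ ≤ Apq p q N := by
    refine (norm_sum_le _ _).trans
      ((Finset.sum_le_sum fun n _ => ?_).trans (Apq_eq_sum_Ico p q N).ge)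
    rw [norm_mul, norm_pow, Complex.norm_real, norm_of_nonneg (wpq_nonneg p q _)]
    exact mul_le_of_le_one_right (wpq_nonneg p q _) (pow_le_one₀ (norm_nonneg z) hz)
  rw [weightedPowerAverage, norm_mul, norm_inv, Complex.norm_real,
    norm_of_nonneg (Apq_nonneg p q N)]
  exact inv_mul_le_one_of_le₀ hsum (Apq_nonneg p q N)

variable (hp : 0 < p) (hq : 0 < q)
include hp hq

lemma norm_weightedPowerAverage_le (hz : ‖z‖ ≤ 1) (hz1 : z ≠ 1) (N : ℕ) :
    ‖weightedPowerAverage p q N z‖ ≤ (Apq p q N)⁻¹ * (3 * (cpq p q)⁻¹ * (2 / ‖1 - z‖)) := by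
  rw [weightedPowerAverage, norm_mul, norm_inv, Complex.norm_real,
    norm_of_nonneg (Apq_nonneg p q N), sum_Ico_one_eq_sum_range (by simp [wpq_of_notMem_Ioo]) N,
    show 3 * (cpq p q)⁻¹ = (cpq p q)⁻¹ + 2 * (cpq p q)⁻¹ by ring]
  have := Apq_nonneg p q N
  gcongr
  refine norm_sum_mul_pow_le hz hz1 (fun n => ?_) ?_
  · rw [Complex.norm_real, norm_of_nonneg (wpq_nonneg p q _)]
    exact wpq_le p q _
  · simp_rw [← Complex.ofReal_sub, Complex.norm_real, Real.norm_eq_abs]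
    exact sum_abs_sub_wpq_le hp hq N

lemma tendsto_weightedPowerAverage (hz : ‖z‖ ≤ 1) :
    Tendsto (weightedPowerAverage p q · z) atTop (𝓝 (if z = 1 then 1 else 0)) := by
  split_ifs with hz1
  · refine tendsto_const_nhds.congr' ?_
    filter_upwards [(tendsto_Apq_atTop hp hq).eventually_ne_atTop 0] with N hN
    rw [weightedPowerAverage, hz1]
    simp_rw [one_pow, mul_one, ← Complex.ofReal_sum, ← Apq_eq_sum_Ico]
    exact (inv_mul_cancel₀ (Complex.ofReal_ne_zero.2 hN)).symm
  rw [tendsto_zero_iff_norm_tendsto_zero]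
  refine squeeze_zero (fun _ => norm_nonneg _) (norm_weightedPowerAverage_le hp hq hz hz1) ?_
  simpa using (tendsto_Apq_atTop hp hq).inv_tendsto_atTop.mul_const _

end WeightedPowerAverage

lemma norm_exp_two_pi_I_mul_ofReal (t : ℝ) : ‖Complex.exp (2 * π * Complex.I * t)‖ = 1 := by
  simp [Complex.norm_exp]

section Fourier

variable {d : ℕ}

lemma dotZ_zero_left (x : Fin d → ℝ) : dotZ 0 x = 0 := by
  simp [dotZ]

lemma dotZ_sub_left (k s : Fin d → ℤ) (x : Fin d → ℝ) :
    dotZ (k - s) x = dotZ k x - dotZ s x := by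
  simp [dotZ, sub_mul]

lemma dotZ_add_smul_right (k : Fin d → ℤ) (x y : Fin d → ℝ) (c : ℝ) :
    dotZ k (x + c • y) = dotZ k x + c * dotZ k y := by
  simp [dotZ, mul_add, Finset.sum_add_distrib, Finset.mul_sum, mul_left_comm]

lemma exp_dotZ_eq_one_iff {ρ : Fin d → ℝ}
    (hρ : ∀ k : Fin d → ℤ, k ≠ 0 → ∀ n : ℤ, dotZ k ρ ≠ n) {k : Fin d → ℤ} :
    Complex.exp (2 * π * Complex.I * (dotZ k ρ : ℂ)) = 1 ↔ k = 0 := by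
  refine ⟨fun h => by_contra fun hk => ?_, fun h => by simp [h, dotZ_zero_left]⟩
  obtain ⟨n, hn⟩ := Complex.exp_eq_one_iff.1 h
  refine hρ k hk n (Complex.ofReal_injective ?_)
  have : 2 * π * Complex.I ≠ 0 := by simp [pi_ne_zero, Complex.I_ne_zero]
  push_cast
  exact mul_left_cancel₀ this (hn.trans (mul_comm _ _))

lemma exp_mul_weightedPowerAverage (p q : ℝ) (N : ℕ) (k s : Fin d → ℤ) (θ ρ : Fin d → ℝ) :
    Complex.exp (2 * π * Complex.I * (dotZ (k - s) θ : ℂ)) *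
        weightedPowerAverage p q N (Complex.exp (2 * π * Complex.I * (dotZ (k - s) ρ : ℂ))) =
      ∑ n ∈ Finset.Ico 1 N, Complex.exp (-(2 * π * Complex.I) * (dotZ s θ : ℂ)) *
        ((Apq p q N : ℂ)⁻¹ * (((wpq p q (n / N) : ℂ) *
          Complex.exp (-(2 * π * Complex.I) * (n : ℂ) * (dotZ s ρ : ℂ))) *
            Complex.exp (2 * π * Complex.I * (dotZ k (θ + (n : ℝ) • ρ) : ℂ)))) := by
  rw [weightedPowerAverage, Finset.mul_sum, Finset.mul_sum]
  refine Finset.sum_congr rfl fun n _ => ?_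
  have hexp : 2 * π * Complex.I * (dotZ (k - s) θ : ℂ) +
        n * (2 * π * Complex.I * (dotZ (k - s) ρ : ℂ)) =
      -(2 * π * Complex.I) * (dotZ s θ : ℂ) + (-(2 * π * Complex.I) * (n : ℂ) * (dotZ s ρ : ℂ) +
        2 * π * Complex.I * (dotZ k (θ + (n : ℝ) • ρ) : ℂ)) := by
    rw [dotZ_sub_left, dotZ_sub_left, dotZ_add_smul_right]
    push_cast
    ring
  rw [← Complex.exp_nat_mul]
  calc _ = (Apq p q N : ℂ)⁻¹ * (wpq p q (n / N) : ℂ) *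
        Complex.exp (2 * π * Complex.I * (dotZ (k - s) θ : ℂ) +
          n * (2 * π * Complex.I * (dotZ (k - s) ρ : ℂ))) := by
        rw [Complex.exp_add]; ring
    _ = _ := by
        rw [hexp, Complex.exp_add, Complex.exp_add]; ring

lemma hasSum_weightedAverage_orbit {E : Type*} [NormedAddCommGroup E] [NormedSpace ℂ E]
    {K : (Fin d → ℝ) → E} {Kh : (Fin d → ℤ) → E}
    (hK : ∀ x, HasSum (fun k => Complex.exp (2 * π * Complex.I * (dotZ k x : ℂ)) • Kh k) (K x))
    (p q : ℝ) (N : ℕ) (s : Fin d → ℤ) (θ ρ : Fin d → ℝ) :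
    HasSum (fun k => (Complex.exp (2 * π * Complex.I * (dotZ (k - s) θ : ℂ)) *
        weightedPowerAverage p q N (Complex.exp (2 * π * Complex.I * (dotZ (k - s) ρ : ℂ)))) •
          Kh k)
      (Complex.exp (-(2 * π * Complex.I) * (dotZ s θ : ℂ)) • ((Apq p q N : ℂ)⁻¹ •
        ∑ n ∈ Finset.Ico 1 N, ((wpq p q (n / N) : ℂ) *
          Complex.exp (-(2 * π * Complex.I) * (n : ℂ) * (dotZ s ρ : ℂ))) •
            K (θ + (n : ℝ) • ρ))) := by
  simp_rw [exp_mul_weightedPowerAverage, Finset.sum_smul, Finset.smul_sum, mul_smul]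
  exact hasSum_sum fun n _ =>
    ((((hK _).const_smul _).const_smul _).const_smul _).const_smul _

end Fourier

theorem weighted_average_recovers_fourier_coefficients_general
    (d : ℕ) (p q : ℝ) (hp : 0 < p) (hq : 0 < q)
    {E : Type*} [NormedAddCommGroup E] [NormedSpace ℂ E]
    (K : (Fin d → ℝ) → E) (Kh : (Fin d → ℤ) → E) (σ : ℝ) (hσ : 0 < σ)
    (hsum : Summable fun k : Fin d → ℤ =>
      ‖Kh k‖ * Real.exp (2 * Real.pi * σ * ∑ j, |(k j : ℝ)|))
    (hK : ∀ x : Fin d → ℝ, HasSum (fun k : Fin d → ℤ =>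
      Complex.exp (2 * Real.pi * Complex.I * ((dotZ k x : ℝ) : ℂ)) • Kh k) (K x))
    (ρ : Fin d → ℝ)
    (hρ : ∀ k : Fin d → ℤ, k ≠ 0 → ∀ n : ℤ, dotZ k ρ ≠ (n : ℝ)) :
    ∀ s : Fin d → ℤ,
      TendstoUniformly
        (fun (N : ℕ) (θ₀ : Fin d → ℝ) =>
          Complex.exp (-(2 * Real.pi * Complex.I) * ((dotZ s θ₀ : ℝ) : ℂ)) •
            (((Apq p q N : ℝ) : ℂ)⁻¹ •
              ∑ n ∈ Finset.Ico 1 N,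
                (((wpq p q ((n : ℝ) / N) : ℝ) : ℂ) *
                    Complex.exp (-(2 * Real.pi * Complex.I) * (n : ℂ) * ((dotZ s ρ : ℝ) : ℂ))) •
                  K (θ₀ + (n : ℝ) • ρ)))
        (fun _ => Kh s) atTop := by
  intro s
  set z : (Fin d → ℤ) → ℂ := fun k => Complex.exp (2 * π * Complex.I * (dotZ k ρ : ℂ))
  have hz (k : Fin d → ℤ) : ‖z k‖ ≤ 1 := (norm_exp_two_pi_I_mul_ofReal _).le
  have hz1 (k : Fin d → ℤ) : z (k - s) = 1 ↔ k = s := (exp_dotZ_eq_one_iff hρ).trans sub_eq_zero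
  have hKh : Summable fun k => ‖Kh k‖ := hsum.of_nonneg_of_le (fun _ => norm_nonneg _)
    fun k => le_mul_of_one_le_right (norm_nonneg _) (one_le_exp (by positivity))
  refine tendstoUniformly_of_hasSum_smul hKh (hasSum_weightedAverage_orbit hK p q · s · ρ)
    (c' := fun k => if z (k - s) = 1 then 1 else 0) ?_
    (b := fun N k => ‖weightedPowerAverage p q N (z (k - s)) - if z (k - s) = 1 then 1 else 0‖)
    (B := 2) ?_ (fun _ _ => norm_nonneg _) ?_ ?_
  · simp_rw [hz1, ite_smul, one_smul, zero_smul]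
    simpa using hasSum_single (f := fun k => if k = s then Kh k else 0) s fun k hk => if_neg hk
  · intro N θ k
    by_cases hk : k = s
    · simp [hk, z, dotZ_zero_left]
    · rw [if_neg ((hz1 k).not.2 hk), sub_zero, sub_zero, norm_mul,
        norm_exp_two_pi_I_mul_ofReal, one_mul]
  · intro N k
    have := norm_weightedPowerAverage_le_one (p := p) (q := q) (hz (k - s)) N
    refine (norm_sub_le _ _).trans ?_
    split_ifs <;> simp only [norm_one, norm_zero] <;> linarith
  · intro k
    simpa using (tendsto_sub_nhds_zero_iff.2 (tendsto_weightedPowerAverage hp hq (hz (k - s)))).norm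

/-- For an analytic `E`-valued embedding `K` and a nonresonant rotation `ρ`, the weighted
Birkhoff average recovers each Fourier coefficient `K̂(s)` of `K`, uniformly in the
initial angle `θ₀`. -/
theorem weighted_average_recovers_fourier_coefficients
    (d : ℕ) (hd : 1 ≤ d) (p q : ℝ) (hp : 0 < p) (hq : 0 < q)
    {E : Type*} [NormedAddCommGroup E] [NormedSpace ℂ E] [CompleteSpace E]
    (K : (Fin d → ℝ) → E) (Kh : (Fin d → ℤ) → E) (σ : ℝ) (hσ : 0 < σ)
    (hsum : Summable fun k : Fin d → ℤ =>
      ‖Kh k‖ * Real.exp (2 * Real.pi * σ * ∑ j, |(k j : ℝ)|))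
    (hK : ∀ x : Fin d → ℝ, HasSum (fun k : Fin d → ℤ =>
      Complex.exp (2 * Real.pi * Complex.I * ((dotZ k x : ℝ) : ℂ)) • Kh k) (K x))
    (ρ : Fin d → ℝ)
    (hρ : ∀ k : Fin d → ℤ, k ≠ 0 → ∀ n : ℤ, dotZ k ρ ≠ (n : ℝ)) :
    ∀ s : Fin d → ℤ,
      TendstoUniformly
        (fun (N : ℕ) (θ₀ : Fin d → ℝ) =>
          Complex.exp (-(2 * Real.pi * Complex.I) * ((dotZ s θ₀ : ℝ) : ℂ)) •
            (((Apq p q N : ℝ) : ℂ)⁻¹ •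
              ∑ n ∈ Finset.Ico 1 N,
                (((wpq p q ((n : ℝ) / N) : ℝ) : ℂ) *
                    Complex.exp (-(2 * Real.pi * Complex.I) * (n : ℂ) * ((dotZ s ρ : ℝ) : ℂ))) •
                  K (θ₀ + (n : ℝ) • ρ)))
        (fun _ => Kh s) atTop :=
  weighted_average_recovers_fourier_coefficients_general d p q hp hq K Kh σ hσ hsum hK ρ hρ
end
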